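/- arXiv:2411.06195 — 3 statements merged into one kernel-verified Lean document; each statement's English description precedes it below -/
import Mathlib

section
/- Let α ∈ [0, 1/2) and define C_α = 2^{−α} Γ(1/2 − α)/√π. For every W > 0, if X_W ~ IG(1/W, 1), then E[X_W^α] ≤ C_α, and moreover E[X_W^α] → C_α as W → 0. -/
open MeasureTheory Set Filter

/-- Density of the inverse Gaussian distribution IG(μ, λ). -/
noncomputable def igPdf (μ lam x : ℝ) : ℝ :=
  Real.sqrt (lam / (2 * Real.pi * x ^ 3)) *
    Real.exp (-(lam * (x - μ) ^ 2) / (2 * μ ^ 2 * x))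

/-- The constant C_α = 2^{-α} Γ(1/2 - α)/√π. -/
noncomputable def Cconst (α : ℝ) : ℝ :=
  2 ^ (-α) * Real.Gamma (1 / 2 - α) / Real.sqrt Real.pi

/-!
Write `x ^ (α - 1) = Γ(1 - α)⁻¹ ∫ r ^ (-α) e ^ (-r x) dr` and exchange the integrals: the moment
becomes an integral in `r` of Laplace transforms of the inverse Gaussian kernel, which are
explicit, `∫ x ^ (-1/2) e ^ (-(p² x + q² / x) / 2) dx = √(2π) / p · e ^ (-p q)` (the Gaussian
integral after `u = p √x - q / √x`). Substituting `r = s² / 2 + W s` gives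
`E[X_W ^ α] = 2 ^ α / Γ(1 - α) · ∫ e ^ (-s) (s (s + 2W)) ^ (-α) ds`. The integrand is dominated by
its value `e ^ (-s) s ^ (-2α)` at `W = 0`, whose integral is `Γ(1 - 2α)`, and
`2 ^ α Γ(1 - 2α) / Γ(1 - α) = C_α` by Legendre's duplication formula.
-/

open Real Topology

theorem integrableOn_rpow_mul_exp_neg_mul_add_div (c : ℝ) {a b : ℝ} (ha : 0 < a) (hb : 0 < b) :
    IntegrableOn (fun x : ℝ => x ^ c * exp (-(a * x + b / x))) (Ioi 0) := by
  have hcont : ContinuousOn (fun x : ℝ => x ^ c * exp (-(a * x + b / x))) (Ioi 0) := by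
    refine ContinuousOn.mul (continuousOn_id.rpow_const fun x hx => Or.inl (ne_of_gt hx)) ?_
    exact continuous_exp.comp_continuousOn <|
      ((continuousOn_const.mul continuousOn_id).add
        (continuousOn_const.div continuousOn_id fun x hx => ne_of_gt hx)).neg
  rw [← Ioc_union_Ioi_eq_Ioi zero_le_one]
  refine IntegrableOn.union ?_ ?_
  · obtain ⟨n, hn⟩ := exists_nat_ge (-c)
    refine Integrable.mono' (integrableOn_const (C := n.factorial / b ^ n) measure_Ioc_lt_top.ne)
      (hcont.mono Ioc_subset_Ioi_self |>.aestronglyMeasurable measurableSet_Ioc) ?_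
    refine (ae_restrict_iff' measurableSet_Ioc).2 (Eventually.of_forall fun x ⟨hx0, hx1⟩ => ?_)
    -- `exp (b / x) ≥ (b / x) ^ n / n!` beats the singularity of `x ^ c` at `0`
    have hexp : exp (-(a * x + b / x)) ≤ n.factorial / b ^ n * x ^ n := by
      have := pow_div_factorial_le_exp (x := b / x) (div_pos hb hx0).le n
      rw [exp_neg]
      calc (exp (a * x + b / x))⁻¹ ≤ (exp (b / x))⁻¹ := by gcongr; nlinarith
        _ ≤ ((b / x) ^ n / n.factorial)⁻¹ := by gcongr
        _ = n.factorial / b ^ n * x ^ n := by rw [div_pow]; field_simp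
    have hpow : x ^ c * x ^ n ≤ 1 := by
      rw [← rpow_natCast, ← rpow_add hx0]
      exact rpow_le_one hx0.le hx1 (by linarith)
    rw [norm_of_nonneg (by positivity)]
    calc x ^ c * exp (-(a * x + b / x)) ≤ x ^ c * (n.factorial / b ^ n * x ^ n) := by gcongr
      _ = n.factorial / b ^ n * (x ^ c * x ^ n) := by ring
      _ ≤ n.factorial / b ^ n := mul_le_of_le_one_right (by positivity) hpow
  · have hdom := integrableOn_rpow_mul_exp_neg_mul_rpow (s := max c 0)
      (by linarith [le_max_right c 0]) one_pos ha |>.mono_set (Ioi_subset_Ioi zero_le_one)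
    refine hdom.mono' (hcont.mono (Ioi_subset_Ioi zero_le_one) |>.aestronglyMeasurable
      measurableSet_Ioi) ?_
    refine (ae_restrict_iff' measurableSet_Ioi).2 (Eventually.of_forall fun x (hx : 1 < x) => ?_)
    have hx0 : 0 < x := by linarith
    rw [norm_of_nonneg (by positivity), rpow_one]
    gcongr
    · exact hx.le
    · exact le_max_left c 0
    · linarith [div_pos hb hx0]

section Laplace

variable {β : ℝ}

theorem integrableOn_rpow_sub_one_mul_exp_neg_mul {r : ℝ} (hβ : 0 < β) (hr : 0 < r) :
    IntegrableOn (fun t : ℝ => t ^ (β - 1) * exp (-(r * t))) (Ioi 0) :=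
  Integrable.of_integral_ne_zero <| by
    rw [integral_rpow_mul_exp_neg_mul_Ioi hβ hr]
    exact mul_ne_zero (by positivity) (Gamma_pos_of_pos hβ).ne'

theorem integral_rpow_sub_one_mul_exp_neg_mul {x : ℝ} (hβ : 0 < β) (hx : 0 < x) :
    ∫ r in Ioi 0, r ^ (β - 1) * exp (-(x * r)) = Gamma β * x ^ (-β) := by
  rw [integral_rpow_mul_exp_neg_mul_Ioi hβ hx, one_div, inv_rpow hx.le, ← rpow_neg hx.le,
    mul_comm]

theorem integrable_prod_mul_rpow_sub_one_mul_exp_neg_mul {g : ℝ → ℝ} (hβ : 0 < β)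
    (hg : IntegrableOn (fun x => g x * x ^ (-β)) (Ioi 0)) :
    Integrable (fun z : ℝ × ℝ => g z.1 * (z.2 ^ (β - 1) * exp (-(z.1 * z.2))))
      ((volume.restrict (Ioi 0)).prod (volume.restrict (Ioi 0))) := by
  have hgm : AEStronglyMeasurable g (volume.restrict (Ioi 0)) := by
    refine (hg.aestronglyMeasurable.mul (measurable_id.pow_const β).aestronglyMeasurable).congr ?_
    refine (ae_restrict_iff' measurableSet_Ioi).2 (Eventually.of_forall fun x (hx : 0 < x) => ?_)
    simp [mul_assoc, ← rpow_add hx]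
  have hkernel : Measurable fun z : ℝ × ℝ => z.2 ^ (β - 1) * exp (-(z.1 * z.2)) := by fun_prop
  refine (integrable_prod_iff (hgm.comp_fst.mul hkernel.aestronglyMeasurable)).2 ⟨?_, ?_⟩
  · refine (ae_restrict_iff' measurableSet_Ioi).2 (Eventually.of_forall fun x hx => ?_)
    exact (integrableOn_rpow_sub_one_mul_exp_neg_mul hβ hx).const_mul (g x)
  · refine (hg.norm.const_mul (Gamma β)).congr ?_
    refine (ae_restrict_iff' measurableSet_Ioi).2 (Eventually.of_forall fun x (hx : 0 < x) => ?_)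
    have hnorm : ∀ r ∈ Ioi (0 : ℝ), ‖g x * (r ^ (β - 1) * exp (-(x * r)))‖ =
        |g x| * (r ^ (β - 1) * exp (-(x * r))) := fun r (hr : 0 < r) => by
      rw [norm_mul, norm_eq_abs, norm_of_nonneg (by positivity)]
    show Gamma β * ‖g x * x ^ (-β)‖ = ∫ r in Ioi 0, ‖g x * (r ^ (β - 1) * exp (-(x * r)))‖
    rw [setIntegral_congr_fun measurableSet_Ioi hnorm, integral_const_mul,
      integral_rpow_sub_one_mul_exp_neg_mul hβ hx, norm_mul, norm_eq_abs,
      norm_of_nonneg (by positivity)]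
    ring

theorem integral_mul_rpow_neg_eq_integral_rpow_mul_laplace {g : ℝ → ℝ} (hβ : 0 < β)
    (hg : IntegrableOn (fun x => g x * x ^ (-β)) (Ioi 0)) :
    ∫ x in Ioi 0, g x * x ^ (-β) =
      (Gamma β)⁻¹ * ∫ r in Ioi 0, r ^ (β - 1) * ∫ x in Ioi 0, g x * exp (-(r * x)) := by
  have hF : ∀ x ∈ Ioi (0 : ℝ), ∫ r in Ioi 0, g x * (r ^ (β - 1) * exp (-(x * r))) =
      Gamma β * (g x * x ^ (-β)) := fun x (hx : 0 < x) => by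
    rw [integral_const_mul, integral_rpow_sub_one_mul_exp_neg_mul hβ hx]
    ring
  calc ∫ x in Ioi 0, g x * x ^ (-β)
      = (Gamma β)⁻¹ * ∫ x in Ioi 0, ∫ r in Ioi 0, g x * (r ^ (β - 1) * exp (-(x * r))) := by
        rw [setIntegral_congr_fun measurableSet_Ioi hF, integral_const_mul,
          inv_mul_cancel_left₀ (Gamma_pos_of_pos hβ).ne']
    _ = (Gamma β)⁻¹ * ∫ r in Ioi 0, ∫ x in Ioi 0, g x * (r ^ (β - 1) * exp (-(x * r))) := by
        rw [integral_integral_swap (integrable_prod_mul_rpow_sub_one_mul_exp_neg_mul hβ hg)]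
    _ = _ := by
        congr 1
        refine setIntegral_congr_fun measurableSet_Ioi fun r _ => ?_
        rw [← integral_const_mul]
        refine integral_congr_ae (Eventually.of_forall fun x => ?_)
        simp only [mul_comm x r]
        ring

end Laplace

section IGNormalization

variable {p q : ℝ}

theorem integrableOn_rpow_mul_exp_neg_sq_mul_add_sq_div (c : ℝ) (hp : p ≠ 0) (hq : q ≠ 0) :
    IntegrableOn (fun x => x ^ c * exp (-((p ^ 2 * x + q ^ 2 / x) / 2))) (Ioi 0) :=
  (integrableOn_rpow_mul_exp_neg_mul_add_div c (a := p ^ 2 / 2) (b := q ^ 2 / 2) (by positivity)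
    (by positivity)).congr_fun (fun x _ => by ring_nf) measurableSet_Ioi

theorem integral_inv_mul_sqrt_mul_exp_neg_sq_mul_add_sq_div (hp : 0 < p) (hq : 0 < q) :
    ∫ x in Ioi 0, (x * √x)⁻¹ * exp (-((p ^ 2 * x + q ^ 2 / x) / 2)) =
      p / q * ∫ x in Ioi 0, (√x)⁻¹ * exp (-((p ^ 2 * x + q ^ 2 / x) / 2)) := by
  set c := (q / p) ^ 2 with hc
  have hc0 : 0 < c := by positivity
  -- `x ↦ c / x` exchanges the two terms `p ^ 2 x` and `q ^ 2 / x` of the exponent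
  have hσ : ∀ x ∈ Ioi (0 : ℝ), HasDerivWithinAt (fun x => c / x) (-(c / x ^ 2)) (Ioi 0) x :=
    fun x (hx : 0 < x) => by
      simpa [div_eq_mul_inv] using ((hasDerivAt_inv hx.ne').const_mul c).hasDerivWithinAt
  have hinj : InjOn (fun x => c / x) (Ioi 0) := fun x _ y _ hxy =>
    inv_injective (mul_left_cancel₀ hc0.ne' hxy)
  have himage : (fun x => c / x) '' Ioi 0 = Ioi 0 :=
    Subset.antisymm (image_subset_iff.2 fun x (hx : 0 < x) => div_pos hc0 hx)
      fun y (hy : 0 < y) => ⟨c / y, div_pos hc0 hy, div_div_cancel₀ hc0.ne'⟩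
  have := integral_image_eq_integral_abs_deriv_smul measurableSet_Ioi hσ hinj
    fun x => (x * √x)⁻¹ * exp (-((p ^ 2 * x + q ^ 2 / x) / 2))
  rw [himage] at this
  rw [this, ← integral_const_mul]
  refine setIntegral_congr_fun measurableSet_Ioi fun x (hx : 0 < x) => ?_
  have hsqrt : √(c / x) = q / p / √x := by
    rw [sqrt_div' _ hx.le, hc, sqrt_sq (by positivity)]
  have hexp : p ^ 2 * (c / x) + q ^ 2 / (c / x) = p ^ 2 * x + q ^ 2 / x := by
    rw [hc]; field_simp; ring
  rw [smul_eq_mul, hsqrt, hexp, abs_neg, abs_of_pos (by positivity), hc]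
  field_simp
  exact sq_sqrt hx.le

theorem hasDerivAt_mul_sqrt_sub_mul_inv_sqrt {x : ℝ} (hx : 0 < x) :
    HasDerivAt (fun x => p * √x - q * (√x)⁻¹) ((p + q / x) / (2 * √x)) x := by
  have h := hasDerivAt_sqrt hx.ne'
  refine ((h.const_mul p).sub ((h.inv (sqrt_pos.2 hx).ne').const_mul q)).congr_deriv ?_
  rw [sq_sqrt hx.le]
  field_simp
  ring

theorem strictMonoOn_mul_sqrt_sub_mul_inv_sqrt (hp : 0 < p) (hq : 0 ≤ q) :
    StrictMonoOn (fun x => p * √x - q * (√x)⁻¹) (Ioi 0) := fun x (hx : 0 < x) y _ hxy => by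
  have hlt : √x < √y := sqrt_lt_sqrt hx.le hxy
  have : q * (√y)⁻¹ ≤ q * (√x)⁻¹ := by gcongr
  dsimp only
  nlinarith

theorem image_mul_sqrt_sub_mul_inv_sqrt (hp : 0 < p) (hq : 0 < q) :
    (fun x => p * √x - q * (√x)⁻¹) '' Ioi 0 = univ := by
  refine eq_univ_of_forall fun u => ?_
  -- `x = t ^ 2` for the positive root `t` of `p t ^ 2 - u t - q`
  set d := √(u ^ 2 + 4 * p * q)
  have hd : d ^ 2 = u ^ 2 + 4 * p * q := sq_sqrt (by positivity)
  have hud : |u| < d := by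
    rw [← sqrt_sq_eq_abs]; exact sqrt_lt_sqrt (sq_nonneg u) (by nlinarith)
  have hud' : 0 < u + d := by linarith [neg_abs_le u]
  have ht : 0 < (u + d) / (2 * p) := by positivity
  refine ⟨((u + d) / (2 * p)) ^ 2, pow_pos ht 2, ?_⟩
  simp only [sqrt_sq ht.le]
  field_simp
  linear_combination hd

theorem integral_inv_sqrt_mul_exp_neg_sq_mul_add_sq_div (hp : 0 < p) (hq : 0 < q) :
    ∫ x in Ioi 0, (√x)⁻¹ * exp (-((p ^ 2 * x + q ^ 2 / x) / 2)) =
      √(2 * π) / p * exp (-(p * q)) := by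
  set f : ℝ → ℝ := fun x => p * √x - q * (√x)⁻¹ with hf
  set E : ℝ → ℝ := fun x => exp (-((p ^ 2 * x + q ^ 2 / x) / 2)) with hE
  have hB : IntegrableOn (fun x => (√x)⁻¹ * E x) (Ioi 0) :=
    (integrableOn_rpow_mul_exp_neg_sq_mul_add_sq_div (-(1 / 2)) hp.ne' hq.ne').congr_fun
      (fun x (hx : 0 < x) => by dsimp only; rw [rpow_neg hx.le, ← sqrt_eq_rpow]) measurableSet_Ioi
  have hA : IntegrableOn (fun x => (x * √x)⁻¹ * E x) (Ioi 0) := by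
    refine (integrableOn_rpow_mul_exp_neg_sq_mul_add_sq_div (-(3 / 2)) hp.ne' hq.ne').congr_fun
      (fun x (hx : 0 < x) => ?_) measurableSet_Ioi
    dsimp only
    rw [rpow_neg hx.le, show (3 / 2 : ℝ) = 1 + 1 / 2 by norm_num, rpow_add hx, rpow_one,
      ← sqrt_eq_rpow]
  have hjac : ∀ x ∈ Ioi (0 : ℝ), |(p + q / x) / (2 * √x)| • exp (-(1 / 2) * f x ^ 2) =
      exp (p * q) * (p / 2 * ((√x)⁻¹ * E x) + q / 2 * ((x * √x)⁻¹ * E x)) := by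
    intro x (hx : 0 < x)
    have hexp : -(1 / 2) * f x ^ 2 = p * q + -((p ^ 2 * x + q ^ 2 / x) / 2) := by
      simp only [hf]; field_simp; rw [sq_sqrt hx.le]; ring
    rw [smul_eq_mul, abs_of_pos (by positivity), hexp, exp_add]
    simp only [hE]
    field_simp
  have hgauss := integral_image_eq_integral_abs_deriv_smul measurableSet_Ioi
    (fun x (hx : 0 < x) => (hasDerivAt_mul_sqrt_sub_mul_inv_sqrt hx).hasDerivWithinAt)
    (strictMonoOn_mul_sqrt_sub_mul_inv_sqrt hp hq.le).injOn fun u => exp (-(1 / 2) * u ^ 2)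
  rw [image_mul_sqrt_sub_mul_inv_sqrt hp hq, Measure.restrict_univ, integral_gaussian,
    setIntegral_congr_fun measurableSet_Ioi hjac, integral_const_mul,
    integral_add (hB.const_mul _) (hA.const_mul _), integral_const_mul, integral_const_mul,
    integral_inv_mul_sqrt_mul_exp_neg_sq_mul_add_sq_div hp hq,
    show π / (1 / 2) = 2 * π by ring] at hgauss
  simp only [hE] at hgauss ⊢
  generalize ∫ x in Ioi 0, (√x)⁻¹ * exp (-((p ^ 2 * x + q ^ 2 / x) / 2)) = B at hgauss ⊢
  rw [hgauss, exp_neg]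
  field_simp
  ring

end IGNormalization

theorem integral_comp_sq_div_two_add_mul_Ioi (g : ℝ → ℝ) {W : ℝ} (hW : 0 ≤ W) :
    ∫ s in Ioi 0, (s + W) * g (s ^ 2 / 2 + W * s) = ∫ r in Ioi 0, g r := by
  have hderiv : ∀ s ∈ Ioi (0 : ℝ),
      HasDerivWithinAt (fun s => s ^ 2 / 2 + W * s) (s + W) (Ioi 0) s := fun s _ => by
    refine (((hasDerivAt_pow 2 s).div_const 2).add
      ((hasDerivAt_id s).const_mul W)).hasDerivWithinAt.congr_deriv ?_
    ring
  have hmono : StrictMonoOn (fun s => s ^ 2 / 2 + W * s) (Ioi 0) :=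
    fun x (hx : 0 < x) y _ hxy => by dsimp only; nlinarith
  have himage : (fun s => s ^ 2 / 2 + W * s) '' Ioi 0 = Ioi 0 := by
    refine Subset.antisymm (image_subset_iff.2 fun s (hs : 0 < s) => by
      simp only [mem_preimage, mem_Ioi]; positivity) fun r (hr : 0 < r) => ?_
    have hd : √(W ^ 2 + 2 * r) ^ 2 = W ^ 2 + 2 * r := sq_sqrt (by positivity)
    have hWd : W < √(W ^ 2 + 2 * r) := by
      conv_lhs => rw [← sqrt_sq hW]
      exact sqrt_lt_sqrt (sq_nonneg W) (by linarith)
    exact ⟨√(W ^ 2 + 2 * r) - W, sub_pos.2 hWd, by linear_combination hd / 2⟩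
  have := integral_image_eq_integral_abs_deriv_smul measurableSet_Ioi hderiv hmono.injOn g
  rw [himage] at this
  rw [this]
  refine setIntegral_congr_fun measurableSet_Ioi fun s (hs : 0 < s) => ?_
  rw [smul_eq_mul, abs_of_pos (by positivity)]

theorem igPdf_inv_one {W x : ℝ} (hW : W ≠ 0) (hx : 0 < x) :
    igPdf W⁻¹ 1 x = exp W / √(2 * π) * ((x * √x)⁻¹ * exp (-((W ^ 2 * x + 1 / x) / 2))) := by
  have hx3 : √(x ^ 3) = x * √x := by
    rw [pow_succ', sqrt_mul' _ (sq_nonneg x), sqrt_sq hx.le, mul_comm]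
  have hexp : -(1 * (x - W⁻¹) ^ 2) / (2 * W⁻¹ ^ 2 * x) = W + -((W ^ 2 * x + 1 / x) / 2) := by
    field_simp; ring
  rw [igPdf, hexp, exp_add, one_div, sqrt_inv, sqrt_mul' _ (by positivity), hx3]
  field_simp

theorem integral_rpow_mul_igPdf_inv_one {α W : ℝ} (hα : α < 1) (hW : 0 < W) :
    ∫ x in Ioi 0, x ^ α * igPdf W⁻¹ 1 x =
      2 ^ α / Gamma (1 - α) * ∫ s in Ioi 0, exp (-s) * (s * (s + 2 * W)) ^ (-α) := by
  set g : ℝ → ℝ := fun x => (√x)⁻¹ * exp (-((W ^ 2 * x + 1 / x) / 2)) with hg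
  have hmoment : ∀ x ∈ Ioi (0 : ℝ),
      x ^ α * igPdf W⁻¹ 1 x = exp W / √(2 * π) * (g x * x ^ (-(1 - α))) := by
    intro x (hx : 0 < x)
    rw [igPdf_inv_one hW.ne' hx, rpow_neg hx.le, rpow_sub hx, rpow_one, hg]
    field_simp
  have hgi : IntegrableOn (fun x => g x * x ^ (-(1 - α))) (Ioi 0) := by
    refine (integrableOn_rpow_mul_exp_neg_sq_mul_add_sq_div (α - 3 / 2) hW.ne' one_ne_zero)
      |>.congr_fun (fun x (hx : 0 < x) => ?_) measurableSet_Ioi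
    simp only [hg]
    rw [sqrt_eq_rpow, ← rpow_neg hx.le, mul_right_comm, ← rpow_add hx, one_pow]
    ring_nf
  have hlaplace : ∀ s ∈ Ioi (0 : ℝ), ∫ x in Ioi 0, g x * exp (-((s ^ 2 / 2 + W * s) * x)) =
      √(2 * π) / (s + W) * exp (-((s + W) * 1)) := fun s (hs : 0 < s) => by
    rw [← integral_inv_sqrt_mul_exp_neg_sq_mul_add_sq_div (by positivity) one_pos]
    refine setIntegral_congr_fun measurableSet_Ioi fun x _ => ?_
    rw [hg, mul_assoc, ← exp_add]
    ring_nf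
  calc ∫ x in Ioi 0, x ^ α * igPdf W⁻¹ 1 x
      = exp W / √(2 * π) * ∫ x in Ioi 0, g x * x ^ (-(1 - α)) := by
        rw [setIntegral_congr_fun measurableSet_Ioi hmoment, integral_const_mul]
    _ = exp W / √(2 * π) * ((Gamma (1 - α))⁻¹ * ∫ s in Ioi 0, (s + W) *
          ((s ^ 2 / 2 + W * s) ^ (1 - α - 1) *
            ∫ x in Ioi 0, g x * exp (-((s ^ 2 / 2 + W * s) * x)))) := by
        rw [integral_mul_rpow_neg_eq_integral_rpow_mul_laplace (by linarith) hgi,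
          ← integral_comp_sq_div_two_add_mul_Ioi
            (fun r => r ^ (1 - α - 1) * ∫ x in Ioi 0, g x * exp (-(r * x))) hW.le]
    _ = exp W / √(2 * π) * ((Gamma (1 - α))⁻¹ * ∫ s in Ioi 0,
          √(2 * π) * exp (-W) * 2 ^ α * (exp (-s) * (s * (s + 2 * W)) ^ (-α))) := by
        congr 2
        refine setIntegral_congr_fun measurableSet_Ioi fun s (hs : 0 < s) => ?_
        have hhalf : (s ^ 2 / 2 + W * s) ^ (1 - α - 1) = 2 ^ α * (s * (s + 2 * W)) ^ (-α) := by
          rw [show s ^ 2 / 2 + W * s = s * (s + 2 * W) / 2 by ring, sub_sub_cancel_left,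
            div_rpow (by positivity) zero_le_two, rpow_neg zero_le_two, div_inv_eq_mul, mul_comm]
        rw [hlaplace s hs, hhalf, mul_one, neg_add, exp_add]
        field_simp
    _ = _ := by
        rw [integral_const_mul, exp_neg]
        field_simp

theorem Cconst_eq_two_rpow_div_Gamma_mul_Gamma {α : ℝ} (hα : α < 1) :
    Cconst α = 2 ^ α / Gamma (1 - α) * Gamma (1 - 2 * α) := by
  have hΓ : 0 < Gamma (1 - α) := Gamma_pos_of_pos (by linarith)
  have hdup := Gamma_mul_Gamma_add_half (1 / 2 - α)
  rw [show 1 / 2 - α + 1 / 2 = 1 - α by ring, show 2 * (1 / 2 - α) = 1 - 2 * α by ring,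
    show 1 - (1 - 2 * α) = 2 * α by ring,
    show (2 : ℝ) ^ (2 * α) = 2 ^ α * 2 ^ α by rw [two_mul, rpow_add two_pos]] at hdup
  rw [Cconst, rpow_neg zero_le_two]
  field_simp
  rw [show (1 - 2 * α) / 2 = 1 / 2 - α by ring, hdup]
  ring

section ShiftedGamma

variable {α : ℝ}

theorem rpow_neg_mul_add_two_mul_le {s W : ℝ} (hα : 0 ≤ α) (hs : 0 < s) (hW : 0 ≤ W) :
    (s * (s + 2 * W)) ^ (-α) ≤ s ^ (-(2 * α)) := by
  rw [neg_mul_eq_mul_neg, rpow_mul hs.le, rpow_two]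
  exact rpow_le_rpow_of_nonpos (by positivity) (by nlinarith) (neg_nonpos.2 hα)

theorem Gamma_one_sub_two_mul_eq_integral (h1 : α < 1 / 2) :
    Gamma (1 - 2 * α) = ∫ s in Ioi 0, exp (-s) * s ^ (-(2 * α)) := by
  rw [Gamma_eq_integral (by linarith), sub_sub_cancel_left]

theorem integrableOn_exp_neg_mul_rpow_neg_two_mul (h1 : α < 1 / 2) :
    IntegrableOn (fun s => exp (-s) * s ^ (-(2 * α))) (Ioi 0) := by
  simpa only [sub_sub_cancel_left] using GammaIntegral_convergent (s := 1 - 2 * α) (by linarith)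

theorem integral_exp_neg_mul_rpow_mul_add_le {W : ℝ} (h0 : 0 ≤ α) (h1 : α < 1 / 2)
    (hW : 0 ≤ W) :
    ∫ s in Ioi 0, exp (-s) * (s * (s + 2 * W)) ^ (-α) ≤ Gamma (1 - 2 * α) := by
  rw [Gamma_one_sub_two_mul_eq_integral h1]
  refine integral_mono_of_nonneg ?_ (integrableOn_exp_neg_mul_rpow_neg_two_mul h1) ?_ <;>
    refine (ae_restrict_iff' measurableSet_Ioi).2 (Eventually.of_forall fun s (hs : 0 < s) => ?_)
  · positivity
  · exact mul_le_mul_of_nonneg_left (rpow_neg_mul_add_two_mul_le h0 hs hW) (exp_pos _).le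

theorem tendsto_integral_exp_neg_mul_rpow_mul_add (h0 : 0 ≤ α) (h1 : α < 1 / 2) :
    Tendsto (fun W => ∫ s in Ioi 0, exp (-s) * (s * (s + 2 * W)) ^ (-α)) (𝓝[>] 0)
      (𝓝 (Gamma (1 - 2 * α))) := by
  rw [Gamma_one_sub_two_mul_eq_integral h1]
  refine tendsto_integral_filter_of_dominated_convergence _ ?_ ?_
    (integrableOn_exp_neg_mul_rpow_neg_two_mul h1) ?_
  · exact Eventually.of_forall fun W => (by fun_prop : Measurable fun s =>
      exp (-s) * (s * (s + 2 * W)) ^ (-α)).aestronglyMeasurable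
  · filter_upwards [self_mem_nhdsWithin] with W (hW : 0 < W)
    refine (ae_restrict_iff' measurableSet_Ioi).2 (Eventually.of_forall fun s (hs : 0 < s) => ?_)
    rw [norm_of_nonneg (by positivity)]
    exact mul_le_mul_of_nonneg_left (rpow_neg_mul_add_two_mul_le h0 hs hW.le) (exp_pos _).le
  · refine (ae_restrict_iff' measurableSet_Ioi).2 (Eventually.of_forall fun s (hs : 0 < s) => ?_)
    have hcont : ContinuousAt (fun W => exp (-s) * (s * (s + 2 * W)) ^ (-α)) 0 :=
      continuousAt_const.mul <| (by fun_prop : Continuous fun W => s * (s + 2 * W)).continuousAt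
        |>.rpow_const (Or.inl (by positivity))
    have h00 : (s * (s + 2 * 0)) ^ (-α) = s ^ (-(2 * α)) := by
      rw [mul_zero, add_zero, neg_mul_eq_mul_neg, rpow_mul hs.le, rpow_two, sq]
    simpa only [h00] using hcont.tendsto.mono_left nhdsWithin_le_nhds

end ShiftedGamma

theorem ig_moment_le_Cconst (α : ℝ) (h0 : 0 ≤ α) (h1 : α < 1 / 2) :
    (∀ W : ℝ, 0 < W →
      ∫ x in Ioi (0 : ℝ), x ^ α * igPdf W⁻¹ 1 x ≤ Cconst α) ∧
    Tendsto (fun W : ℝ => ∫ x in Ioi (0 : ℝ), x ^ α * igPdf W⁻¹ 1 x)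
      (nhdsWithin 0 (Ioi 0)) (nhds (Cconst α)) := by
  have hα : α < 1 := by linarith
  have hmoment := fun W (hW : 0 < W) => integral_rpow_mul_igPdf_inv_one hα hW
  have hconst : 0 ≤ 2 ^ α / Gamma (1 - α) := by
    have := Gamma_pos_of_pos (by linarith : 0 < 1 - α)
    positivity
  rw [Cconst_eq_two_rpow_div_Gamma_mul_Gamma hα]
  refine ⟨fun W hW => ?_, ?_⟩
  · rw [hmoment W hW]
    exact mul_le_mul_of_nonneg_left (integral_exp_neg_mul_rpow_mul_add_le h0 h1 hW.le) hconst
  · exact ((tendsto_integral_exp_neg_mul_rpow_mul_add h0 h1).const_mul _).congr'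
      (eventually_nhdsWithin_of_forall fun W hW => (hmoment W hW).symm)
end

section
/- Let Λ be a finite set, W ∈ ℝ^{Λ×Λ} symmetric, β ∈ ℝ^Λ with H_β = 2 diag(β) − W positive definite. Let J̃ ⊆ J ⊆ Λ, set I = Λ\J and Ĩ = Λ\J̃. Defining for any partition Λ = I' ∪ J' the effective weights W^{J'}(β_{I'}) = W_{J'J'} + W_{J'I'}((H_β)_{I'I'})^{-1} W_{I'J'}, one has the semigroup property W^{J̃}(β_{Ĩ}) = (W^J(β_I))^{J̃}(β_{J\J̃}), where the outer restriction operation is applied to the matrix W^J(β_I) with the field β_J on J. -/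
open Matrix Set

attribute [local instance] Classical.propDecidable

/-- Submatrix of `A` with rows in `S` and columns in `T`. -/
def subM {α : Type*} (A : Matrix α α ℝ) (S T : Set α) : Matrix S T ℝ :=
  Matrix.of fun i j => A (i : α) (j : α)

/-- Effective weight matrix `W^J(β_{Jᶜ}) = W_{JJ} + W_{J Jᶜ} ((H_β)_{JᶜJᶜ})⁻¹ W_{Jᶜ J}`,
where `H_β = 2 diag(β) - W`. -/
noncomputable def eff {α : Type*} [Fintype α] [DecidableEq α]
    (A : Matrix α α ℝ) (β : α → ℝ) (J : Set α) : Matrix J J ℝ :=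
  subM A J J +
    subM A J Jᶜ * (subM (2 • Matrix.diagonal β - A) Jᶜ Jᶜ)⁻¹ * subM A Jᶜ J

/-!
By the Schur-complement formula for the inverse of a block matrix,
`W^K(β_{Kᶜ}) = 2 diag(β_K) - ((H_β⁻¹)_{KK})⁻¹` for every `K ⊆ Λ`. For `K = J` this says that the
matrix `2 diag(β_J) - W^J(β_I)` which governs the second restriction is `((H_β⁻¹)_{JJ})⁻¹`: it is
positive definite, with inverse `(H_β⁻¹)_{JJ}`. Applying the formula once more, on `J` with
`K = J̃`, turns the right-hand side into `2 diag(β_{J̃}) - ((H_β⁻¹)_{J̃J̃})⁻¹`, which is the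
left-hand side by the formula on `Λ` with `K = J̃`.
-/

section EffectiveWeights

variable {α : Type*}

theorem Matrix.PosDef.subM {H : Matrix α α ℝ} (hH : H.PosDef) (S : Set α) :
    (subM H S S).PosDef :=
  hH.submatrix Subtype.val_injective

theorem subM_subM_eq_submatrix (A : Matrix α α ℝ) {J Jt : Set α} (h : Jt ⊆ J) :
    subM (subM A J J) {x : J | (x : α) ∈ Jt} {x : J | (x : α) ∈ Jt} =
      let e := Equiv.subtypeSubtypeEquivSubtype fun hx ↦ h hx
      (subM A Jt Jt).submatrix e e :=
  rfl

section Diagonal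

variable [DecidableEq α] (W : Matrix α α ℝ) (β : α → ℝ)

theorem subM_two_smul_diagonal_sub (K : Set α) :
    subM (2 • diagonal β - W) K K = 2 • diagonal (fun i : K => β i) - subM W K K := by
  ext i j
  simp only [subM, of_apply, Matrix.sub_apply, Matrix.smul_apply, diagonal_apply,
    Subtype.val_inj]

theorem subM_two_smul_diagonal_sub_of_disjoint {S T : Set α} (hST : Disjoint S T) :
    subM (2 • diagonal β - W) S T = -subM W S T := by
  ext i j
  simp only [subM, of_apply, Matrix.sub_apply, Matrix.smul_apply, Matrix.neg_apply,
    diagonal_apply, hST.ne_of_mem i.2 j.2, if_false, smul_zero, zero_sub]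

end Diagonal

variable [Fintype α] [DecidableEq α]

theorem inv_subM_inv_eq_schurComplement {H : Matrix α α ℝ} (K : Set α) (hH : IsUnit H)
    (hD : IsUnit (subM H Kᶜ Kᶜ)) :
    (subM H⁻¹ K K)⁻¹ = subM H K K - subM H K Kᶜ * (subM H Kᶜ Kᶜ)⁻¹ * subM H Kᶜ K := by
  set A := subM H K K
  set B := subM H K Kᶜ
  set C := subM H Kᶜ K
  set D := subM H Kᶜ Kᶜ
  let e := Equiv.Set.sumCompl K
  have hblocks : H.submatrix e e = fromBlocks A B C D := by ext (i | i) (j | j) <;> rfl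
  let _ := hD.invertible
  let _ := hH.invertible
  let _ : Invertible (fromBlocks A B C D) := hblocks ▸ H.submatrixEquivInvertible e e
  let _ := invertibleOfFromBlocks₂₂Invertible A B C D
  have hcorner := congrArg toBlocks₁₁ (invOf_fromBlocks₂₂_eq A B C D)
  rw [toBlocks_fromBlocks₁₁, invOf_eq_nonsing_inv, ← hblocks, inv_submatrix_equiv] at hcorner
  change subM H⁻¹ K K = _ at hcorner
  rw [hcorner, invOf_eq_nonsing_inv, inv_inv_of_invertible, invOf_eq_nonsing_inv]

theorem eff_eq_sub_inv_subM_inv {W : Matrix α α ℝ} {β : α → ℝ}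
    (hpos : (2 • diagonal β - W).PosDef) (K : Set α) :
    eff W β K = 2 • diagonal (fun i : K => β i) - (subM (2 • diagonal β - W)⁻¹ K K)⁻¹ := by
  rw [inv_subM_inv_eq_schurComplement K hpos.isUnit (hpos.subM Kᶜ).isUnit,
    subM_two_smul_diagonal_sub, subM_two_smul_diagonal_sub_of_disjoint W β disjoint_compl_right,
    subM_two_smul_diagonal_sub_of_disjoint W β disjoint_compl_left, eff]
  simp only [Matrix.neg_mul, Matrix.mul_neg, neg_neg]
  abel

end EffectiveWeights

theorem eff_semigroup_general {Λ : Type*} [Fintype Λ] [DecidableEq Λ]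
    (W : Matrix Λ Λ ℝ) (β : Λ → ℝ)
    (hpos : (2 • Matrix.diagonal β - W).PosDef)
    (J Jt : Set Λ) (hsub : Jt ⊆ J) :
    ∀ (i j : Λ) (hi : i ∈ Jt) (hj : j ∈ Jt),
      eff W β Jt ⟨i, hi⟩ ⟨j, hj⟩ =
        eff (eff W β J) (fun x : J => β (x : Λ)) {x : J | (x : Λ) ∈ Jt}
          ⟨⟨i, hsub hi⟩, hi⟩ ⟨⟨j, hsub hj⟩, hj⟩ := by
  intro i j hi hj
  set H := 2 • diagonal β - W
  have hHJ : (subM H⁻¹ J J).PosDef := hpos.inv.subM J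
  have hH_eff : 2 • diagonal (fun x : J => β x) - eff W β J = (subM H⁻¹ J J)⁻¹ := by
    rw [eff_eq_sub_inv_subM_inv hpos, sub_sub_cancel]
  have hpos_eff : (2 • diagonal (fun x : J => β x) - eff W β J).PosDef := hH_eff ▸ hHJ.inv
  rw [eff_eq_sub_inv_subM_inv hpos, eff_eq_sub_inv_subM_inv hpos_eff, hH_eff,
    nonsing_inv_nonsing_inv _ ((isUnit_iff_isUnit_det _).mp hHJ.isUnit),
    subM_subM_eq_submatrix _ hsub, inv_submatrix_equiv]
  simp only [Matrix.sub_apply, Matrix.smul_apply, diagonal_apply, submatrix_apply,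
    Subtype.mk.injEq]
  rfl

theorem eff_semigroup {Λ : Type*} [Fintype Λ] [DecidableEq Λ]
    (W : Matrix Λ Λ ℝ) (hW : W.IsSymm) (β : Λ → ℝ)
    (hpos : (2 • Matrix.diagonal β - W).PosDef)
    (J Jt : Set Λ) (hsub : Jt ⊆ J) :
    ∀ (i j : Λ) (hi : i ∈ Jt) (hj : j ∈ Jt),
      eff W β Jt ⟨i, hi⟩ ⟨j, hj⟩ =
        eff (eff W β J) (fun x : J => β (x : Λ)) {x : J | (x : Λ) ∈ Jt}
          ⟨⟨i, hsub hi⟩, hi⟩ ⟨⟨j, hsub hj⟩, hj⟩ :=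
  eff_semigroup_general W β hpos J Jt hsub
end

section
/- Let Λ be a finite set, W ∈ [0,∞)^{Λ×Λ} symmetric with the graph on Λ induced by positive entries connected, and β ∈ ℝ^Λ such that H_β = 2diag(β) − W restricted to Λ₋ = Λ\{ρ} is positive definite, for a fixed ρ ∈ Λ. Define u_ρ = 0 and e^{u_{Λ₋}} = ((H_β)_{Λ₋Λ₋})^{-1} W_{Λ₋ρ}. Let ρ ∈ J ⊆ Λ with |J| ≥ 2, I = Λ\J, J₋ = J\{ρ}. Then e^{u_{J₋}} = ((H_{β_J}^{W^J(β_I)})_{J₋J₋})^{-1} (W^J(β_I))_{J₋ρ}, where W^J(β_I) = W_{JJ} + W_{JI}((H_β)_{II})^{-1}W_{IJ} and H_{β_J}^{W^J(β_I)} = 2diag(β_J) − W^J(β_I). -/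
/-!
Split `Λ₋ = J₋ ⊔ I`. In block form the system `(H_β)_{Λ₋Λ₋} e^u = W_{Λ₋ρ}` reads
`A x + B y = W_{J₋ρ}`, `C x + D y = W_{Iρ}` with `x = e^{u_{J₋}}` and `D = (H_β)_{II}`, which is
invertible as a principal submatrix of a positive definite matrix. Eliminating `y` gives
`(A - B D⁻¹ C) x = W_{J₋ρ} - B D⁻¹ W_{Iρ}`. The off-diagonal blocks of `H_β = 2 diag β - W` are
those of `-W`, so the Schur complement `A - B D⁻¹ C` is `(H_{β_J}^{W^J(β_I)})_{J₋J₋}` and the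
right-hand side is `W^J(β_I)_{J₋ρ}`.
-/

open Matrix Set

attribute [local instance] Classical.propDecidable

namespace Matrix

theorem submatrix_nsmul_diagonal_sub_of_ne {α n p q : Type*} [AddCommGroup α] [DecidableEq n]
    (k : ℕ) (d : n → α) (W : Matrix n n α) {f : p → n} {g : q → n} (hfg : ∀ a b, f a ≠ g b) :
    (k • diagonal d - W).submatrix f g = -W.submatrix f g := by
  ext a b
  simp [diagonal_apply_ne d (hfg a b)]

theorem submatrix_nsmul_diagonal_sub {α n p : Type*} [AddCommGroup α] [DecidableEq n]
    [DecidableEq p] (k : ℕ) (d : n → α) (W : Matrix n n α) {f : p → n}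
    (hf : Function.Injective f) :
    (k • diagonal d - W).submatrix f f = k • diagonal (d ∘ f) - W.submatrix f f := by
  rw [← submatrix_diagonal d f hf]
  rfl

theorem schur_nsmul_diagonal_sub {α n p q : Type*} [Fintype q] [CommRing α] [DecidableEq n]
    [DecidableEq p] (k : ℕ) (d : n → α) (W : Matrix n n α) {f : p → n} (g : q → n)
    (hf : Function.Injective f) (X : Matrix q q α) :
    (k • diagonal d - W).submatrix f f - (-W.submatrix f g) * X * (-W.submatrix g f) =
      k • diagonal (d ∘ f) - (W.submatrix f f + W.submatrix f g * X * W.submatrix g f) := by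
  simp only [Matrix.neg_mul, Matrix.mul_neg, neg_neg]
  rw [submatrix_nsmul_diagonal_sub k d W hf, sub_sub]

variable {l m n R : Type*} [Fintype m] [Fintype n] [DecidableEq n] [CommRing R]

theorem inv_mulVec_comp_equiv [Fintype l] [DecidableEq l] (M : Matrix n n R) (e : l ≃ n)
    (w : n → R) : (M⁻¹ *ᵥ w) ∘ e = (M.submatrix e e)⁻¹ *ᵥ (w ∘ e) := by
  rw [inv_submatrix_equiv, submatrix_mulVec_equiv, Function.comp_assoc, e.self_comp_symm,
    Function.comp_id]

theorem mulVec_eq_of_fromBlocks_mulVec_eq {A : Matrix m m R} {B : Matrix m n R}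
    {C : Matrix n m R} {D : Matrix n n R} (hD : IsUnit D.det) {x u : m → R} {y v : n → R}
    (h : fromBlocks A B C D *ᵥ Sum.elim x y = Sum.elim u v) :
    (A - B * D⁻¹ * C) *ᵥ x = u - B *ᵥ (D⁻¹ *ᵥ v) := by
  rw [fromBlocks_mulVec] at h
  have hu : A *ᵥ x + B *ᵥ y = u := by simpa using congrArg (· ∘ Sum.inl) h
  have hv : C *ᵥ x + D *ᵥ y = v := by simpa using congrArg (· ∘ Sum.inr) h
  have hy : y = D⁻¹ *ᵥ (v - C *ᵥ x) := by
    rw [← hv, add_sub_cancel_left, mulVec_mulVec, nonsing_inv_mul _ hD, one_mulVec]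
  calc (A - B * D⁻¹ * C) *ᵥ x = A *ᵥ x - B *ᵥ (D⁻¹ *ᵥ (C *ᵥ x)) := by
        rw [sub_mulVec, mulVec_mulVec, mulVec_mulVec, Matrix.mul_assoc]
    _ = u - B *ᵥ (D⁻¹ *ᵥ v) := by
        rw [← hu, hy, mulVec_sub, mulVec_sub]
        abel

theorem inv_fromBlocks_mulVec_sumElim_inl [DecidableEq m] {A : Matrix m m R} {B : Matrix m n R}
    {C : Matrix n m R} {D : Matrix n n R} (hM : IsUnit (fromBlocks A B C D).det)
    (hD : IsUnit D.det) (u : m → R) (v : n → R) :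
    ((fromBlocks A B C D)⁻¹ *ᵥ Sum.elim u v) ∘ Sum.inl =
      (A - B * D⁻¹ * C)⁻¹ *ᵥ (u - B *ᵥ (D⁻¹ *ᵥ v)) := by
  set z := (fromBlocks A B C D)⁻¹ *ᵥ Sum.elim u v
  have hz : fromBlocks A B C D *ᵥ Sum.elim (z ∘ Sum.inl) (z ∘ Sum.inr) = Sum.elim u v := by
    rw [Sum.elim_comp_inl_inr, mulVec_mulVec, mul_nonsing_inv _ hM, one_mulVec]
  have hS : IsUnit (A - B * D⁻¹ * C).det := by
    let := D.invertibleOfIsUnitDet hD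
    rw [det_fromBlocks₂₂, invOf_eq_nonsing_inv, IsUnit.mul_iff] at hM
    exact hM.2
  rw [← mulVec_eq_of_fromBlocks_mulVec_eq hD hz, mulVec_mulVec, nonsing_inv_mul _ hS,
    one_mulVec]

end Matrix

theorem subM_eq_submatrix {α : Type*} (A : Matrix α α ℝ) (S T : Set α) :
    subM A S T = A.submatrix Subtype.val Subtype.val :=
  rfl

noncomputable def puncturedSumEquivOfIsCompl {Λ : Type*} {J I : Set Λ} (hJI : IsCompl J I)
    {ρ : Λ} (hρ : ρ ∈ J) : {x : J | (x : Λ) ≠ ρ} ⊕ I ≃ {x : Λ | x ≠ ρ} where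
  toFun := Sum.elim (fun a => ⟨a.1.1, a.2⟩)
    (fun i => ⟨i.1, fun h => hJI.disjoint.notMem_of_mem_left (h ▸ hρ) i.2⟩)
  invFun x :=
    if h : x.1 ∈ J then Sum.inl ⟨⟨x.1, h⟩, x.2⟩ else Sum.inr ⟨x.1, hJI.compl_eq ▸ h⟩
  left_inv := by
    rintro (a | i)
    · simp [a.1.2]
    · simp [hJI.disjoint.notMem_of_mem_right i.2]
  right_inv x := by
    by_cases h : x.1 ∈ J <;> simp [h]

theorem submatrix_puncturedSumEquivOfIsCompl {Λ : Type*} [DecidableEq Λ] {J I : Set Λ}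
    (hJI : IsCompl J I) {ρ : Λ} (hρ : ρ ∈ J) {k : ℕ} {β : Λ → ℝ} {W H : Matrix Λ Λ ℝ}
    (hH : H = k • diagonal β - W) :
    (subM H {x | x ≠ ρ} {x | x ≠ ρ}).submatrix (puncturedSumEquivOfIsCompl hJI hρ)
        (puncturedSumEquivOfIsCompl hJI hρ) =
      fromBlocks (H.submatrix (Subtype.val ∘ Subtype.val) (Subtype.val ∘ Subtype.val))
        (-W.submatrix (Subtype.val ∘ Subtype.val) Subtype.val)
        (-W.submatrix Subtype.val (Subtype.val ∘ Subtype.val)) (subM H I I) := by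
  have hdisj : ∀ (a : {x : J | (x : Λ) ≠ ρ}) (i : I), (Subtype.val ∘ Subtype.val) a ≠ i :=
    fun a i h => hJI.disjoint.notMem_of_mem_left (h ▸ a.1.2) i.2
  rw [← submatrix_nsmul_diagonal_sub_of_ne k β W hdisj,
    ← submatrix_nsmul_diagonal_sub_of_ne k β W fun i a => (hdisj a i).symm, ← hH]
  ext (a | i) (b | k) <;> rfl

theorem u_field_restriction_general {Λ : Type*} [Fintype Λ] [DecidableEq Λ]
    (W : Matrix Λ Λ ℝ)
    (ρ : Λ) (β : Λ → ℝ)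
    (H : Matrix Λ Λ ℝ) (hH : H = 2 • Matrix.diagonal β - W)
    (hpos : (subM H {x | x ≠ ρ} {x | x ≠ ρ}).PosDef)
    (eu : {x : Λ | x ≠ ρ} → ℝ)
    (heu : eu = (subM H {x | x ≠ ρ} {x | x ≠ ρ})⁻¹ *ᵥ
      fun i : {x : Λ | x ≠ ρ} => W (i : Λ) ρ)
    (J : Set Λ) (hρJ : ρ ∈ J)
    (I : Set Λ) (hI : I = Jᶜ)
    (EW : Matrix J J ℝ)
    (hEW : EW = subM W J J + subM W J I * (subM H I I)⁻¹ * subM W I J)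
    (HJ : Matrix J J ℝ)
    (hHJ : HJ = 2 • Matrix.diagonal (fun j : J => β (j : Λ)) - EW) :
    ∀ (j : Λ) (hjJ : j ∈ J) (hj : j ≠ ρ),
      eu ⟨j, hj⟩ =
        ((subM HJ {x : J | (x : Λ) ≠ ρ} {x : J | (x : Λ) ≠ ρ})⁻¹ *ᵥ
            fun i : {x : J | (x : Λ) ≠ ρ} => EW (i : J) ⟨ρ, hρJ⟩)
          ⟨⟨j, hjJ⟩, hj⟩ := by
  intro j hjJ hj
  subst heu hEW hHJ
  have hJI : IsCompl J I := hI ▸ isCompl_compl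
  set e := puncturedSumEquivOfIsCompl hJI hρJ
  set ι : {x : J | (x : Λ) ≠ ρ} → Λ := Subtype.val ∘ Subtype.val
  set κ : I → Λ := Subtype.val
  set D := subM H I I
  have hblocks := submatrix_puncturedSumEquivOfIsCompl hJI hρJ hH
  have hM : IsUnit (fromBlocks (H.submatrix ι ι) (-W.submatrix ι κ)
      (-W.submatrix κ ι) D).det := by
    rw [← hblocks, det_submatrix_equiv_self]
    exact hpos.det_pos.ne'.isUnit
  have hD : IsUnit D.det :=
    (hpos.submatrix (e.injective.comp Sum.inr_injective)).det_pos.ne'.isUnit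
  have hschur : H.submatrix ι ι - (-W.submatrix ι κ) * D⁻¹ * (-W.submatrix κ ι) =
      subM (2 • diagonal (fun j : J => β (j : Λ)) - (subM W J J + subM W J I * D⁻¹ * subM W I J))
        {x : J | (x : Λ) ≠ ρ} {x : J | (x : Λ) ≠ ρ} := by
    rw [hH, schur_nsmul_diagonal_sub _ _ _ _ (Subtype.val_injective.comp Subtype.val_injective),
      subM_eq_submatrix, submatrix_nsmul_diagonal_sub _ _ _ Subtype.val_injective]
    rfl
  have hrhs : (fun a => W (ι a) ρ) - (-W.submatrix ι κ) *ᵥ (D⁻¹ *ᵥ fun i => W (κ i) ρ) =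
      fun a : {x : J | (x : Λ) ≠ ρ} =>
        (subM W J J + subM W J I * D⁻¹ * subM W I J) a ⟨ρ, hρJ⟩ := by
    rw [neg_mulVec, sub_neg_eq_add, mulVec_mulVec]
    rfl
  have hw : (fun i : {x : Λ | x ≠ ρ} => W i ρ) ∘ e =
      Sum.elim (fun a => W (ι a) ρ) fun i => W (κ i) ρ := by
    ext (a | i) <;> rfl
  have key := inv_fromBlocks_mulVec_sumElim_inl hM hD (fun a => W (ι a) ρ) fun i => W (κ i) ρ
  rw [hschur, hrhs, ← hblocks, ← hw, ← inv_mulVec_comp_equiv] at key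
  exact congrFun key ⟨⟨j, hjJ⟩, hj⟩

/-- Restriction property of the u-field: the vector `e^{u_{Λ₋}}` solving
`(H_β)_{Λ₋Λ₋} e^{u_{Λ₋}} = W_{Λ₋ρ}` on `Λ₋ = Λ \ {ρ}`, restricted to `J₋ = J \ {ρ}`,
equals the analogous vector computed on `J` from the effective weights
`W^J(β_I) = W_{JJ} + W_{JI}((H_β)_{II})⁻¹ W_{IJ}` with
`H_{β_J}^{W^J(β_I)} = 2 diag(β_J) − W^J(β_I)`. -/
theorem u_field_restriction {Λ : Type*} [Fintype Λ] [DecidableEq Λ]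
    (W : Matrix Λ Λ ℝ) (hsymm : W.IsSymm) (hnn : ∀ i j, 0 ≤ W i j)
    (hconn : (SimpleGraph.fromRel fun i j => 0 < W i j).Connected)
    (ρ : Λ) (β : Λ → ℝ)
    (H : Matrix Λ Λ ℝ) (hH : H = 2 • Matrix.diagonal β - W)
    (hpos : (subM H {x | x ≠ ρ} {x | x ≠ ρ}).PosDef)
    (eu : {x : Λ | x ≠ ρ} → ℝ)
    (heu : eu = (subM H {x | x ≠ ρ} {x | x ≠ ρ})⁻¹ *ᵥ
      fun i : {x : Λ | x ≠ ρ} => W (i : Λ) ρ)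
    (J : Set Λ) (hρJ : ρ ∈ J) (hJ2 : 2 ≤ J.ncard)
    (I : Set Λ) (hI : I = Jᶜ)
    (EW : Matrix J J ℝ)
    (hEW : EW = subM W J J + subM W J I * (subM H I I)⁻¹ * subM W I J)
    (HJ : Matrix J J ℝ)
    (hHJ : HJ = 2 • Matrix.diagonal (fun j : J => β (j : Λ)) - EW) :
    ∀ (j : Λ) (hjJ : j ∈ J) (hj : j ≠ ρ),
      eu ⟨j, hj⟩ =
        ((subM HJ {x : J | (x : Λ) ≠ ρ} {x : J | (x : Λ) ≠ ρ})⁻¹ *ᵥ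
            fun i : {x : J | (x : Λ) ≠ ρ} => EW (i : J) ⟨ρ, hρJ⟩)
          ⟨⟨j, hjJ⟩, hj⟩ :=
  u_field_restriction_general W ρ β H hH hpos eu heu J hρJ I hI EW hEW HJ hHJ
end
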